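/- Set γ_{1,1} = H1−E1−E4, γ_{1,2} = H1−E2−E3, γ_{2,1} = H0−E5−E8, γ_{2,2} = H0−E6−E7, γ_{3,1} = H0+H1−E9−E10−E11−E14, γ_{3,2} = H0+H1−E9−E10−E12−E13. Then γ_{i,j}·γ_{i,j} = −2 for all i,j, γ_{i,1}·γ_{i,2} = 0 for each i, and, denoting by r_γ the reflection r_γ(v) = v + (γ·v)γ (for γ with γ·γ = −2), one has wi = r_{γ_{i,1}} ∘ r_{γ_{i,2}} = r_{γ_{i,2}} ∘ r_{γ_{i,1}} as ℤ-linear maps on Pic, for i = 1, 2, 3. -/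

import Mathlib

/-- The Picard lattice of the space of initial values of the HV equation:
the free ℤ-module of rank 16 with basis `H0, H1, E1, …, E14`. -/
abbrev Pic : Type := Fin 16 → ℤ

/-- The class `H0` (total transform of a line `x = const`). -/
def H0 : Pic := Pi.single 0 1

/-- The class `H1` (total transform of a line `y = const`). -/
def H1 : Pic := Pi.single 1 1

/-- The exceptional classes: `E k` is the paper's `E_{k+1}` for `k : Fin 14`. -/
def E (k : Fin 14) : Pic := Pi.single k.succ.succ 1

/-- The intersection form: `H0·H1 = 1`, `H0·H0 = H1·H1 = 0`, `Ek·El = -δ`, `Hi·Ek = 0`. -/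
def ip (u v : Pic) : ℤ :=
  u 0 * v 1 + u 1 * v 0 - ∑ k : Fin 14, u k.succ.succ * v k.succ.succ

/-- The canonical class `K = -2H0 - 2H1 + E1 + ⋯ + E14`. -/
def KX : Pic := (-2 : ℤ) • H0 + (-2 : ℤ) • H1 + ∑ k : Fin 14, E k

/-- The classes `D0, …, D12` of the irreducible components of `-K`. -/
def D : Fin 13 → Pic :=
  ![E 0 - E 1, E 1 - E 2, E 2 - E 3,
    E 4 - E 5, E 5 - E 6, E 6 - E 7,
    E 8 - E 9, E 10 - E 11, E 11 - E 12, E 12 - E 13,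
    H0 - E 0 - E 1 - E 8, H1 - E 4 - E 5 - E 8, E 9 - E 10 - E 11]

/-- The root basis `α1, α2, α3` of the orthogonal complement of the `D`'s. -/
def α : Fin 3 → Pic :=
  ![(2 : ℤ) • H1 - E 0 - E 1 - E 2 - E 3,
    (2 : ℤ) • H0 - E 4 - E 5 - E 6 - E 7,
    (2 : ℤ) • H0 + (2 : ℤ) • H1 - (2 : ℤ) • E 8 - (2 : ℤ) • E 9 - E 10 - E 11 - E 12 - E 13]

/-- The ℤ-linear map sending the `j`-th basis vector to `f j`. -/
def ofImages (f : Fin 16 → Pic) : Pic →ₗ[ℤ] Pic :=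
  Matrix.toLin' (Matrix.of fun i j => f j i)

/-- The generator `w1`. -/
def w1 : Pic →ₗ[ℤ] Pic := ofImages
  ![H0 + (2 : ℤ) • H1 - E 0 - E 1 - E 2 - E 3, H1,
    H1 - E 3, H1 - E 2, H1 - E 1, H1 - E 0,
    E 4, E 5, E 6, E 7, E 8, E 9, E 10, E 11, E 12, E 13]

/-- The generator `w2`. -/
def w2 : Pic →ₗ[ℤ] Pic := ofImages
  ![H0, (2 : ℤ) • H0 + H1 - E 4 - E 5 - E 6 - E 7,
    E 0, E 1, E 2, E 3,
    H0 - E 7, H0 - E 6, H0 - E 5, H0 - E 4,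
    E 8, E 9, E 10, E 11, E 12, E 13]

/-- The generator `w3`. -/
def w3 : Pic →ₗ[ℤ] Pic := ofImages
  ![H0 + α 2, H1 + α 2,
    E 0, E 1, E 2, E 3, E 4, E 5, E 6, E 7,
    E 8 + α 2, E 9 + α 2,
    E 10 + (H0 + H1 - E 8 - E 9 - E 10 - E 13),
    E 11 + (H0 + H1 - E 8 - E 9 - E 11 - E 12),
    E 12 + (H0 + H1 - E 8 - E 9 - E 11 - E 12),
    E 13 + (H0 + H1 - E 8 - E 9 - E 10 - E 13)]

/-- The generator `σ12`. -/
def s12 : Pic →ₗ[ℤ] Pic := ofImages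
  ![H1, H0, E 4, E 5, E 6, E 7, E 0, E 1, E 2, E 3,
    E 8, E 9, E 10, E 11, E 12, E 13]

/-- The generator `σ13`. -/
def s13 : Pic →ₗ[ℤ] Pic := ofImages
  ![H0, H0 + H1 - E 8 - E 9,
    E 10, E 11, E 12, E 13,
    E 4, E 5, E 6, E 7,
    H0 - E 9, H0 - E 8,
    E 0, E 1, E 2, E 3]

/-- The action `φ` of the Hietarinta–Viallet equation on the Picard lattice. -/
def phiHV : Pic →ₗ[ℤ] Pic := ofImages
  ![(3 : ℤ) • H0 + H1 - E 4 - E 5 - E 6 - E 7 - E 8 - E 9, H0,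
    H0 - E 7, H0 - E 6, H0 - E 5, H0 - E 4,
    E 10, E 11, E 12, E 13,
    H0 - E 9, H0 - E 8,
    E 0, E 1, E 2, E 3]

/-- The roots `γ_{i,j}` (`i : Fin 3`, `j : Fin 2`):
`γ_{1,1} = H1-E1-E4`, `γ_{1,2} = H1-E2-E3`, `γ_{2,1} = H0-E5-E8`, `γ_{2,2} = H0-E6-E7`,
`γ_{3,1} = H0+H1-E9-E10-E11-E14`, `γ_{3,2} = H0+H1-E9-E10-E12-E13`. -/
def γ : Fin 3 → Fin 2 → Pic :=
  ![![H1 - E 0 - E 3, H1 - E 1 - E 2],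
    ![H0 - E 4 - E 7, H0 - E 5 - E 6],
    ![H0 + H1 - E 8 - E 9 - E 10 - E 13, H0 + H1 - E 8 - E 9 - E 11 - E 12]]

/-- The reflection `r_g(v) = v + (g·v)·g` in a class `g` with `g·g = -2`. -/
def reflectIn (g v : Pic) : Pic := v + ip g v • g

/-- The three reflection generators, indexed by `Fin 3`. -/
def wvec : Fin 3 → (Pic →ₗ[ℤ] Pic) := ![w1, w2, w3]

/-- Each `γ_{i,j}` is a `(-2)`-class, `γ_{i,1} ⊥ γ_{i,2}`, and
`wi = r_{γ_{i,1}} ∘ r_{γ_{i,2}} = r_{γ_{i,2}} ∘ r_{γ_{i,1}}` as ℤ-linear maps on `Pic`. -/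
lemma ip_add_smul (g v h : Pic) (c : ℤ) : ip g (v + c • h) = ip g v + c * ip g h := by
  have key : ∀ x : Fin 14, g x.succ.succ * (v x.succ.succ + c * h x.succ.succ)
      = g x.succ.succ * v x.succ.succ + c * (g x.succ.succ * h x.succ.succ) := fun x => by ring
  simp only [ip, Pi.add_apply, Pi.smul_apply, smul_eq_mul, key, Finset.sum_add_distrib,
    ← Finset.mul_sum]
  ring

lemma reflect_comm (g h v : Pic) (hgh : ip g h = 0) (hhg : ip h g = 0) :
    reflectIn g (reflectIn h v) = reflectIn h (reflectIn g v) := by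
  simp only [reflectIn, ip_add_smul, hgh, hhg, mul_zero, add_zero, smul_eq_mul]
  abel

set_option maxHeartbeats 1600000 in
lemma gam_sq : ∀ i : Fin 3, ∀ j : Fin 2, ip (γ i j) (γ i j) = -2 := by
  intro i j
  fin_cases i <;> fin_cases j <;>
    simp (config := { decide := true }) [ip, γ, H0, H1, E, Fin.sum_univ_succ,
      Pi.single_apply, Fin.succ, Fin.ext_iff]

set_option maxHeartbeats 1600000 in
lemma gam_orth : ∀ i : Fin 3, ip (γ i 0) (γ i 1) = 0 := by
  intro i
  fin_cases i <;>
    simp (config := { decide := true }) [ip, γ, H0, H1, E, Fin.sum_univ_succ,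
      Pi.single_apply, Fin.succ, Fin.ext_iff]

set_option maxHeartbeats 1600000 in
lemma gam_orth' : ∀ i : Fin 3, ip (γ i 1) (γ i 0) = 0 := by
  intro i
  fin_cases i <;>
    simp (config := { decide := true }) [ip, γ, H0, H1, E, Fin.sum_univ_succ,
      Pi.single_apply, Fin.succ, Fin.ext_iff]

lemma comp_eq (i : Fin 3) (v : Pic) :
    reflectIn (γ i 0) (reflectIn (γ i 1) v)
      = v + ip (γ i 1) v • γ i 1 + ip (γ i 0) v • γ i 0 := by
  simp only [reflectIn, ip_add_smul, gam_orth i, mul_zero, add_zero]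

set_option maxHeartbeats 1600000 in
lemma w1_eq (v : Pic) : w1 v = reflectIn (γ 0 0) (reflectIn (γ 0 1) v) := by
  rw [comp_eq]
  funext k
  fin_cases k <;>
  · simp (config := { decide := true }) [w1, ofImages, ip, γ,
      H0, H1, E, Matrix.toLin'_apply, Matrix.mulVec, dotProduct, Fin.sum_univ_succ,
      Pi.single_apply]
    try ring

set_option maxHeartbeats 1600000 in
lemma w2_eq (v : Pic) : w2 v = reflectIn (γ 1 0) (reflectIn (γ 1 1) v) := by
  rw [comp_eq]
  funext k
  fin_cases k <;>
  · simp (config := { decide := true }) [w2, ofImages, ip, γ,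
      H0, H1, E, Matrix.toLin'_apply, Matrix.mulVec, dotProduct, Fin.sum_univ_succ,
      Pi.single_apply]
    try ring

set_option maxHeartbeats 6000000 in
lemma w3_eq (v : Pic) : w3 v = reflectIn (γ 2 0) (reflectIn (γ 2 1) v) := by
  rw [comp_eq]
  funext k
  fin_cases k <;>
  · simp (config := { decide := true }) [w3, α, ofImages, ip, γ,
      H0, H1, E, Matrix.toLin'_apply, Matrix.mulVec, dotProduct, Fin.sum_univ_succ,
      Pi.single_apply, Matrix.vecHead, Matrix.vecTail]
    try ring

lemma third : ∀ i : Fin 3, ∀ v : Pic, wvec i v = reflectIn (γ i 0) (reflectIn (γ i 1) v) := by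
  intro i v
  fin_cases i
  · exact w1_eq v
  · exact w2_eq v
  · exact w3_eq v

theorem wi_eq_product_of_two_reflections :
    (∀ i : Fin 3, ∀ j : Fin 2, ip (γ i j) (γ i j) = -2) ∧
    (∀ i : Fin 3, ip (γ i 0) (γ i 1) = 0) ∧
    (∀ i : Fin 3, ∀ v : Pic, wvec i v = reflectIn (γ i 0) (reflectIn (γ i 1) v)) ∧
    (∀ i : Fin 3, ∀ v : Pic, wvec i v = reflectIn (γ i 1) (reflectIn (γ i 0) v)) := by
  refine ⟨gam_sq, gam_orth, third, fun i v => ?_⟩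
  rw [third i v, reflect_comm _ _ _ (gam_orth i) (gam_orth' i)]
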